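/- arXiv:2201.11360 — 4 statements merged into one kernel-verified Lean document; each statement's English description precedes it below -/
import Mathlib

section
/- Let d ≥ 2 and let ρ be a density matrix on ℂ^d ⊗ ℂ^d. Then ρ has absolute fully entangled fraction (that is, F(UρU†) ≤ 1/d for every unitary U on ℂ^d ⊗ ℂ^d) if and only if the largest eigenvalue of ρ is at most 1/d. -/
open Matrix Kronecker Complex
open scoped ComplexOrder

/-- The canonical maximally entangled vector `|ψ⁺⟩ = (1/√d) ∑ᵢ |ii⟩` on `ℂ^d ⊗ ℂ^d`. -/
noncomputable def psiPlus (d : ℕ) : (Fin d × Fin d) → ℂ :=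
  fun p => if p.1 = p.2 then ((Real.sqrt d)⁻¹ : ℝ) else 0

/-- The fully entangled fraction: the supremum over `d × d` unitaries `V` of
`⟨ψ⁺| (I ⊗ V)† ρ (I ⊗ V) |ψ⁺⟩`. -/
noncomputable def fef (d : ℕ) (ρ : Matrix (Fin d × Fin d) (Fin d × Fin d) ℂ) : ℝ :=
  ⨆ V : Matrix.unitaryGroup (Fin d) ℂ,
    (star (psiPlus d) ⬝ᵥ
      ((((1 : Matrix (Fin d) (Fin d) ℂ) ⊗ₖ (V : Matrix (Fin d) (Fin d) ℂ))ᴴ * ρ *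
        ((1 : Matrix (Fin d) (Fin d) ℂ) ⊗ₖ (V : Matrix (Fin d) (Fin d) ℂ))) *ᵥ psiPlus d)).re

/-- A density matrix: positive semidefinite with unit trace. -/
def IsDensityMatrix {n : Type*} [Fintype n] (ρ : Matrix n n ℂ) : Prop :=
  ρ.PosSemidef ∧ ρ.trace = 1

/-- `ρ` has absolute fully entangled fraction: `F(UρU†) ≤ 1/d` for every unitary `U`. -/
def AbsFEF (d : ℕ) (ρ : Matrix (Fin d × Fin d) (Fin d × Fin d) ℂ) : Prop :=
  ∀ U ∈ Matrix.unitaryGroup (Fin d × Fin d) ℂ, fef d (U * ρ * Uᴴ) ≤ 1 / d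

/-!
Every term of the supremum defining `fef d (U ρ U†)` is `⟨w| ρ |w⟩` for the unit vector
`w = U† (I ⊗ V) |ψ⁺⟩`, hence at most the largest eigenvalue of `ρ`. Conversely, the unitary group
acts transitively on unit vectors, so some `U` maps an eigenvector of `ρ` to `|ψ⁺⟩`; the term at
`V = I` is then the corresponding eigenvalue.
-/

lemma EuclideanSpace.norm_toLp_eq_one_iff {𝕜 n : Type*} [RCLike 𝕜] [Fintype n] {u : n → 𝕜} :
    ‖WithLp.toLp 2 u‖ = 1 ↔ star u ⬝ᵥ u = 1 := by
  rw [← pow_eq_one_iff_of_nonneg (norm_nonneg _) two_ne_zero, ← RCLike.ofReal_inj (K := 𝕜),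
    RCLike.ofReal_pow, ← inner_self_eq_norm_sq_to_K, EuclideanSpace.inner_eq_star_dotProduct,
    dotProduct_comm]
  simp

namespace Matrix
variable {𝕜 n : Type*} [RCLike 𝕜] [Fintype n]

lemma dotProduct_conjTranspose_mul_mul_mulVec (A P : Matrix n n 𝕜) (x : n → 𝕜) :
    star x ⬝ᵥ (Pᴴ * A * P) *ᵥ x = star (P *ᵥ x) ⬝ᵥ A *ᵥ (P *ᵥ x) := by
  rw [star_mulVec, ← mulVec_mulVec, ← mulVec_mulVec, dotProduct_mulVec, dotProduct_mulVec,
    dotProduct_mulVec, vecMul_vecMul]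

variable [DecidableEq n]

lemma IsHermitian.posSemidef_smul_one_sub {A : Matrix n n 𝕜} (hA : A.IsHermitian) {c : ℝ}
    (hc : ∀ i, hA.eigenvalues i ≤ c) : ((c : 𝕜) • 1 - A).PosSemidef := by
  have hdiag : (c : 𝕜) • 1 - A = Unitary.conjStarAlgAut 𝕜 _ hA.eigenvectorUnitary
      (diagonal (RCLike.ofReal ∘ fun i => c - hA.eigenvalues i)) := by
    conv_lhs => rw [hA.spectral_theorem]
    have : diagonal (RCLike.ofReal ∘ fun i => c - hA.eigenvalues i) =
        (c : 𝕜) • (1 : Matrix n n 𝕜) - diagonal (RCLike.ofReal ∘ hA.eigenvalues) := by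
      ext i j
      by_cases h : i = j <;> simp [h, RCLike.real_smul_eq_coe_mul]
    rw [this, map_sub, map_smul, map_one]
  rw [hdiag, Unitary.conjStarAlgAut_apply]
  refine (PosSemidef.diagonal fun i => ?_).mul_mul_conjTranspose_same _
  simpa using hc i

lemma PosSemidef.re_dotProduct_mulVec_le {A : Matrix n n 𝕜} {c : ℝ}
    (h : ((c : 𝕜) • 1 - A).PosSemidef) {x : n → 𝕜} (hx : star x ⬝ᵥ x = 1) :
    RCLike.re (star x ⬝ᵥ A *ᵥ x) ≤ c := by
  have := h.re_dotProduct_nonneg x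
  rw [sub_mulVec, dotProduct_sub, smul_mulVec, one_mulVec, dotProduct_smul, hx] at this
  simpa [RCLike.real_smul_eq_coe_mul] using this

lemma PosSemidef.smul_one_sub_conjTranspose_mul_mul {A U : Matrix n n 𝕜} {c : 𝕜}
    (h : (c • 1 - A).PosSemidef) (hU : U ∈ unitaryGroup n 𝕜) :
    (c • 1 - Uᴴ * A * U).PosSemidef := by
  have hUU : Uᴴ * U = 1 := mem_unitaryGroup_iff'.mp hU
  have : c • 1 - Uᴴ * A * U = Uᴴ * (c • 1 - A) * U := by
    rw [Matrix.mul_sub, Matrix.sub_mul, Matrix.mul_smul, Matrix.smul_mul, Matrix.mul_one, hUU]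
  rw [this]
  exact h.conjTranspose_mul_mul_same U

lemma exists_mem_unitaryGroup_mulVec_single_eq {u : n → 𝕜} (hu : star u ⬝ᵥ u = 1) (i : n) :
    ∃ B ∈ unitaryGroup n 𝕜, B *ᵥ Pi.single i 1 = u := by
  obtain ⟨b, hb⟩ := Orthonormal.exists_orthonormalBasis_extension_of_card_eq (𝕜 := 𝕜)
    (finrank_euclideanSpace (𝕜 := 𝕜) (ι := n)) (v := fun _ => WithLp.toLp 2 u) (s := {i})
    (by simpa using EuclideanSpace.norm_toLp_eq_one_iff.mpr hu)
  refine ⟨_, (EuclideanSpace.basisFun n 𝕜).toMatrix_orthonormalBasis_mem_unitary b, ?_⟩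
  rw [mulVec_single_one]
  ext j
  change b i j = u j
  rw [hb i rfl]

lemma exists_mem_unitaryGroup_mulVec_eq [Nonempty n] {u v : n → 𝕜}
    (hu : star u ⬝ᵥ u = 1) (hv : star v ⬝ᵥ v = 1) :
    ∃ M ∈ unitaryGroup n 𝕜, M *ᵥ u = v := by
  let i : n := Classical.arbitrary n
  obtain ⟨B, hB, hBu⟩ := exists_mem_unitaryGroup_mulVec_single_eq hu i
  obtain ⟨C, hC, hCv⟩ := exists_mem_unitaryGroup_mulVec_single_eq hv i
  refine ⟨C * star B, mul_mem hC (Unitary.star_mem hB), ?_⟩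
  rw [← hBu, ← hCv, mulVec_mulVec, Matrix.mul_assoc, Unitary.star_mul_self_of_mem hB,
    Matrix.mul_one]

end Matrix

lemma IsDensityMatrix.nonempty {n : Type*} [Fintype n] {ρ : Matrix n n ℂ}
    (hρ : IsDensityMatrix ρ) : Nonempty n := by
  by_contra h
  rw [not_nonempty_iff] at h
  simpa [Matrix.trace] using hρ.2

lemma star_psiPlus_dotProduct_psiPlus (d : ℕ) [NeZero d] : star (psiPlus d) ⬝ᵥ psiPlus d = 1 := by
  have hterm (p : Fin d × Fin d) :
      star (psiPlus d p) * psiPlus d p = if p.1 = p.2 then ((d : ℂ))⁻¹ else 0 := by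
    by_cases h : p.1 = p.2
    · simp only [psiPlus, h, if_true, Complex.star_def, Complex.conj_ofReal, ← Complex.ofReal_mul,
        ← mul_inv, Real.mul_self_sqrt (Nat.cast_nonneg d)]
      push_cast; rfl
    · simp [psiPlus, h]
  simp only [dotProduct, Pi.star_apply, hterm, Fintype.sum_prod_type, Finset.sum_ite_eq,
    Finset.mem_univ, if_true, Finset.sum_const, Finset.card_univ, Fintype.card_fin, nsmul_eq_mul]
  exact mul_inv_cancel₀ (NeZero.ne _)

/-- `fef d σ` is definitionally `⨆ V, psiPlusFidelity d σ V`. -/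
noncomputable def psiPlusFidelity (d : ℕ) (σ : Matrix (Fin d × Fin d) (Fin d × Fin d) ℂ)
    (V : Matrix.unitaryGroup (Fin d) ℂ) : ℝ :=
  (star (psiPlus d) ⬝ᵥ
    ((((1 : Matrix (Fin d) (Fin d) ℂ) ⊗ₖ (V : Matrix (Fin d) (Fin d) ℂ))ᴴ * σ *
      ((1 : Matrix (Fin d) (Fin d) ℂ) ⊗ₖ (V : Matrix (Fin d) (Fin d) ℂ))) *ᵥ psiPlus d)).re

lemma psiPlusFidelity_one (d : ℕ) (σ : Matrix (Fin d × Fin d) (Fin d × Fin d) ℂ) :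
    psiPlusFidelity d σ 1 = (star (psiPlus d) ⬝ᵥ σ *ᵥ psiPlus d).re := by
  simp [psiPlusFidelity]

lemma psiPlusFidelity_le {d : ℕ} [NeZero d] {σ : Matrix (Fin d × Fin d) (Fin d × Fin d) ℂ}
    {c : ℝ} (h : ((c : ℂ) • 1 - σ).PosSemidef) (V : Matrix.unitaryGroup (Fin d) ℂ) :
    psiPlusFidelity d σ V ≤ c :=
  (h.smul_one_sub_conjTranspose_mul_mul (kronecker_mem_unitary (one_mem _) V.2)
    ).re_dotProduct_mulVec_le (star_psiPlus_dotProduct_psiPlus d)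

lemma fef_le_of_posSemidef {d : ℕ} [NeZero d] {σ : Matrix (Fin d × Fin d) (Fin d × Fin d) ℂ}
    {c : ℝ} (h : ((c : ℂ) • 1 - σ).PosSemidef) : fef d σ ≤ c :=
  ciSup_le (psiPlusFidelity_le h)

lemma re_psiPlus_le_fef {d : ℕ} [NeZero d] {σ : Matrix (Fin d × Fin d) (Fin d × Fin d) ℂ}
    (hσ : σ.IsHermitian) : (star (psiPlus d) ⬝ᵥ σ *ᵥ psiPlus d).re ≤ fef d σ := by
  have hc := hσ.posSemidef_smul_one_sub
    fun i => le_ciSup (Set.finite_range hσ.eigenvalues).bddAbove i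
  rw [← psiPlusFidelity_one]
  exact le_ciSup ⟨_, Set.forall_mem_range.2 (psiPlusFidelity_le hc)⟩ 1

theorem absFEF_iff_maxEigenvalue_le_general (d : ℕ)
    (ρ : Matrix (Fin d × Fin d) (Fin d × Fin d) ℂ) (hρ : IsDensityMatrix ρ) :
    AbsFEF d ρ ↔ ∀ i, hρ.1.isHermitian.eigenvalues i ≤ 1 / d := by
  obtain ⟨⟨i₀, -⟩⟩ := hρ.nonempty
  have : NeZero d := ⟨i₀.pos.ne'⟩
  set hH := hρ.1.isHermitian
  constructor
  · intro habs i
    set v : Fin d × Fin d → ℂ := ⇑(hH.eigenvectorBasis i)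
    have hv : star v ⬝ᵥ v = 1 :=
      EuclideanSpace.norm_toLp_eq_one_iff.mp (hH.eigenvectorBasis.orthonormal.1 i)
    obtain ⟨M, hM, hMv⟩ := exists_mem_unitaryGroup_mulVec_eq hv (star_psiPlus_dotProduct_psiPlus d)
    have hMψ : Mᴴ *ᵥ psiPlus d = v := by
      rw [← hMv, mulVec_mulVec, ← star_eq_conjTranspose, Unitary.star_mul_self_of_mem hM,
        one_mulVec]
    calc hH.eigenvalues i = (star v ⬝ᵥ ρ *ᵥ v).re := hH.eigenvalues_eq i
      _ = (star (psiPlus d) ⬝ᵥ (M * ρ * Mᴴ) *ᵥ psiPlus d).re := by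
        rw [← hMψ, ← dotProduct_conjTranspose_mul_mul_mulVec, conjTranspose_conjTranspose]
      _ ≤ fef d (M * ρ * Mᴴ) := re_psiPlus_le_fef (isHermitian_mul_mul_conjTranspose M hH)
      _ ≤ 1 / d := habs M hM
  · intro h U hU
    refine fef_le_of_posSemidef ?_
    simpa [star_eq_conjTranspose] using
      (hH.posSemidef_smul_one_sub h).smul_one_sub_conjTranspose_mul_mul (Unitary.star_mem hU)

/-- A density matrix on `ℂ^d ⊗ ℂ^d` has absolute fully entangled fraction iff its
largest eigenvalue is at most `1/d`. -/
theorem absFEF_iff_maxEigenvalue_le (d : ℕ) (hd : 2 ≤ d)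
    (ρ : Matrix (Fin d × Fin d) (Fin d × Fin d) ℂ) (hρ : IsDensityMatrix ρ) :
    AbsFEF d ρ ↔ ∀ i, hρ.1.isHermitian.eigenvalues i ≤ 1 / d :=
  absFEF_iff_maxEigenvalue_le_general d ρ hρ
end

section
/- Let d ≥ 2. If ρ₁ and ρ₂ are density matrices on ℂ^d ⊗ ℂ^d belonging to 𝔄𝔉_d and λ ∈ [0,1], then λρ₁ + (1−λ)ρ₂ also belongs to 𝔄𝔉_d; that is, the set 𝔄𝔉_d is convex. -/
open Matrix Kronecker Complex
open scoped ComplexOrder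

/-- Basis vector `|ij⟩` of `ℂ^d ⊗ ℂ^d`. -/
def ket (d : ℕ) (i j : Fin d) : (Fin d × Fin d) → ℂ :=
  fun p => if p = (i, j) then 1 else 0

/-- Rank-one projector `|v⟩⟨v|`. -/
def proj {n : Type*} (v : n → ℂ) : Matrix n n ℂ :=
  Matrix.vecMulVec v (star v)


/-! Each overlap `ρ ↦ ⟨ψ⁺| (I ⊗ V)† ρ (I ⊗ V) |ψ⁺⟩` is `ℝ`-linear, so a sublevel set
`{ρ | F(ρ) ≤ c}` of their supremum is an intersection of half-spaces, hence convex, and `𝔄𝔉_d`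
is an intersection of preimages of `{F ≤ 1/d}` under the linear maps `ρ ↦ U ρ U†`. The unitary
group is compact, so the supremum defining `F` is finite: otherwise `⨆` would take the junk value
`0` and `F(ρ) ≤ c` would not bound the individual overlaps. -/

@[fun_prop]
theorem Continuous.matrix_kronecker {X R l m p q : Type*} [TopologicalSpace X]
    [TopologicalSpace R] [Mul R] [ContinuousMul R] {A : X → Matrix l m R} {B : X → Matrix p q R}
    (hA : Continuous A) (hB : Continuous B) : Continuous fun x => A x ⊗ₖ B x :=
  continuous_pi fun _ => continuous_pi fun _ => by
    simp only [kroneckerMap_apply]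
    fun_prop

namespace Matrix

variable {n 𝕜 : Type*} [Fintype n] [DecidableEq n] [RCLike 𝕜]

theorem isCompact_unitaryGroup : IsCompact (unitaryGroup n 𝕜 : Set (Matrix n n 𝕜)) := by
  refine (isCompact_univ_pi fun _ => isCompact_univ_pi fun _ =>
    isCompact_closedBall (0 : 𝕜) 1).of_isClosed_subset (isClosed_unitary (R := Matrix n n 𝕜)) ?_
  intro U hU i _ j _
  simpa using entry_norm_bound_of_unitary hU i j

instance : CompactSpace (unitaryGroup n 𝕜) :=
  isCompact_iff_compactSpace.mp isCompact_unitaryGroup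

end Matrix

noncomputable def fefOverlap (d : ℕ) (ρ : Matrix (Fin d × Fin d) (Fin d × Fin d) ℂ)
    (V : unitaryGroup (Fin d) ℂ) : ℝ :=
  (star (psiPlus d) ⬝ᵥ
    ((((1 : Matrix (Fin d) (Fin d) ℂ) ⊗ₖ (V : Matrix (Fin d) (Fin d) ℂ))ᴴ * ρ *
      ((1 : Matrix (Fin d) (Fin d) ℂ) ⊗ₖ (V : Matrix (Fin d) (Fin d) ℂ))) *ᵥ psiPlus d)).re

theorem isLinearMap_fefOverlap (d : ℕ) (V : unitaryGroup (Fin d) ℂ) :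
    IsLinearMap ℝ fun ρ => fefOverlap d ρ V where
  map_add ρ σ := by simp [fefOverlap, Matrix.mul_add, Matrix.add_mul, Matrix.add_mulVec]
  map_smul c ρ := by simp [fefOverlap, Matrix.smul_mulVec, Complex.real_smul]

theorem continuous_fefOverlap (d : ℕ) (ρ : Matrix (Fin d × Fin d) (Fin d × Fin d) ℂ) :
    Continuous (fefOverlap d ρ) := by
  unfold fefOverlap
  fun_prop

theorem fef_le_iff {d : ℕ} {ρ : Matrix (Fin d × Fin d) (Fin d × Fin d) ℂ} {c : ℝ} :
    fef d ρ ≤ c ↔ ∀ V, fefOverlap d ρ V ≤ c :=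
  ciSup_le_iff (isCompact_range (continuous_fefOverlap d ρ)).bddAbove

theorem convex_setOf_fef_le (d : ℕ) (c : ℝ) : Convex ℝ {ρ | fef d ρ ≤ c} := by
  simp_rw [fef_le_iff, Set.ofPred_forall]
  exact convex_iInter fun V => convex_halfSpace_le (isLinearMap_fefOverlap d V) c

theorem convex_setOf_absFEF (d : ℕ) : Convex ℝ {ρ | AbsFEF d ρ} := by
  have hset : {ρ | AbsFEF d ρ} = ⋂ U ∈ unitaryGroup (Fin d × Fin d) ℂ,
      LinearMap.mulLeftRight ℝ (U, Uᴴ) ⁻¹' {σ | fef d σ ≤ 1 / d} := by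
    ext ρ
    simp [AbsFEF]
  rw [hset]
  exact convex_iInter₂ fun U _ => (convex_setOf_fef_le d _).linear_preimage _

theorem absFEF_convex_general (d : ℕ)
    (ρ₁ ρ₂ : Matrix (Fin d × Fin d) (Fin d × Fin d) ℂ)
    (h₁ : AbsFEF d ρ₁) (h₂ : AbsFEF d ρ₂)
    (t : ℝ) (ht0 : 0 ≤ t) (ht1 : t ≤ 1) :
    AbsFEF d ((t : ℂ) • ρ₁ + ((1 - t : ℝ) : ℂ) • ρ₂) := by
  simpa only [Complex.coe_smul, Set.mem_ofPred_eq] using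
    convex_setOf_absFEF d h₁ h₂ ht0 (sub_nonneg.mpr ht1) (add_sub_cancel t 1)

/-- The set `𝔄𝔉_d` is convex: a convex combination of two density matrices with
absolute fully entangled fraction again has absolute fully entangled fraction. -/
theorem absFEF_convex (d : ℕ) (hd : 2 ≤ d)
    (ρ₁ ρ₂ : Matrix (Fin d × Fin d) (Fin d × Fin d) ℂ)
    (hρ₁ : IsDensityMatrix ρ₁) (hρ₂ : IsDensityMatrix ρ₂)
    (h₁ : AbsFEF d ρ₁) (h₂ : AbsFEF d ρ₂)
    (t : ℝ) (ht0 : 0 ≤ t) (ht1 : t ≤ 1) :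
    AbsFEF d ((t : ℂ) • ρ₁ + ((1 - t : ℝ) : ℂ) • ρ₂) :=
  absFEF_convex_general d ρ₁ ρ₂ h₁ h₂ t ht0 ht1
end

section
/- Let d ≥ 2 and let ρ be a density matrix on ℂ^d ⊗ ℂ^d that does not belong to 𝔄𝔉_d. Then there exists a Hermitian d²×d² matrix S such that Tr(Sσ) ≥ 0 for every σ ∈ 𝔄𝔉_d, while Tr(Sρ) < 0. -/
open Matrix Kronecker Complex
open scoped ComplexOrder

/-!
On trace-one matrices, `AbsFEF d σ` is a family of linear inequalities: `⟨w|σ|w⟩ ≤ 1/d`, i.e.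
`Tr((I/d - |w⟩⟨w|) σ) ≥ 0`, for every `w = U†(I ⊗ V)|ψ⁺⟩` with `U, V` unitary. If `ρ ∉ 𝔄𝔉_d`, then
`F(UρU†) > 1/d` for some `U`, so some term of the supremum exceeds `1/d`, i.e. one of these
inequalities fails for `ρ`, and `I/d - |w⟩⟨w|` is the witness. The one estimate needed is
`⟨y|τ|y⟩ ≤ ‖y‖² Tr τ` for `τ ≥ 0`: it bounds the family defining `F`, so each term lies below `F`
(in `ℝ` the supremum of an unbounded family is the junk value `0`).
-/

section

variable {n : Type*} [Fintype n]

lemma star_mulVec_dotProduct_mulVec (A σ : Matrix n n ℂ) (ψ : n → ℂ) :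
    star (A *ᵥ ψ) ⬝ᵥ (σ *ᵥ (A *ᵥ ψ)) = star ψ ⬝ᵥ ((Aᴴ * σ * A) *ᵥ ψ) := by
  rw [star_mulVec, dotProduct_mulVec, vecMul_vecMul, dotProduct_mulVec, vecMul_vecMul,
    dotProduct_mulVec]

lemma trace_proj_mul (w : n → ℂ) (σ : Matrix n n ℂ) :
    (proj w * σ).trace = star w ⬝ᵥ (σ *ᵥ w) := by
  rw [proj, vecMulVec_mul, trace_vecMulVec, dotProduct_comm, dotProduct_mulVec]

lemma trace_smul_one_sub_proj_mul [DecidableEq n] (c : ℂ) (w : n → ℂ) {σ : Matrix n n ℂ}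
    (hσ : σ.trace = 1) : ((c • 1 - proj w) * σ).trace = c - star w ⬝ᵥ (σ *ᵥ w) := by
  rw [sub_mul, trace_sub, smul_mul, one_mul, trace_smul, hσ, smul_eq_mul, mul_one, trace_proj_mul]

lemma re_star_dotProduct_self (v : n → ℂ) : (star v ⬝ᵥ v).re = ∑ i, normSq (v i) := by
  simp [dotProduct, normSq_apply, mul_comm]

lemma normSq_dotProduct_le (a y : n → ℂ) :
    normSq (a ⬝ᵥ y) ≤ (∑ j, normSq (a j)) * ∑ j, normSq (y j) := by
  simp only [← Complex.sq_norm]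
  calc ‖a ⬝ᵥ y‖ ^ 2 ≤ (∑ j, ‖a j‖ * ‖y j‖) ^ 2 := by
        gcongr
        exact (norm_sum_le _ _).trans_eq (by simp)
    _ ≤ _ := Finset.sum_mul_sq_le_sq_mul_sq _ _ _

lemma re_trace_conjTranspose_mul_self (B : Matrix n n ℂ) :
    (Bᴴ * B).trace.re = ∑ i, ∑ j, normSq (B i j) := by
  rw [trace_mul_comm]
  simp [trace, mul_apply, normSq_apply]

open scoped MatrixOrder in
lemma Matrix.PosSemidef.re_dotProduct_mulVec_le_s3 [DecidableEq n] {τ : Matrix n n ℂ}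
    (hτ : τ.PosSemidef) (y : n → ℂ) :
    (star y ⬝ᵥ (τ *ᵥ y)).re ≤ (star y ⬝ᵥ y).re * τ.trace.re := by
  obtain ⟨B, rfl⟩ : ∃ B : Matrix n n ℂ, τ = Bᴴ * B :=
    CStarAlgebra.nonneg_iff_eq_star_mul_self.mp hτ.nonneg
  calc (star y ⬝ᵥ ((Bᴴ * B) *ᵥ y)).re = (star (B *ᵥ y) ⬝ᵥ (B *ᵥ y)).re := by
        rw [star_mulVec, ← dotProduct_mulVec, mulVec_mulVec]
    _ = ∑ i, normSq ((B *ᵥ y) i) := re_star_dotProduct_self _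
    _ ≤ ∑ i, (∑ j, normSq (B i j)) * ∑ j, normSq (y j) :=
        Finset.sum_le_sum fun i _ => normSq_dotProduct_le (B i) y
    _ = _ := by
        rw [re_star_dotProduct_self, re_trace_conjTranspose_mul_self, ← Finset.sum_mul, mul_comm]

end

section

variable {d : ℕ}

noncomputable def rotatedPsiPlus (d : ℕ) (V : unitaryGroup (Fin d) ℂ) : Fin d × Fin d → ℂ :=
  ((1 : Matrix (Fin d) (Fin d) ℂ) ⊗ₖ (V : Matrix (Fin d) (Fin d) ℂ)) *ᵥ psiPlus d

noncomputable def fefAt (d : ℕ) (ρ : Matrix (Fin d × Fin d) (Fin d × Fin d) ℂ)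
    (V : unitaryGroup (Fin d) ℂ) : ℝ :=
  (star (rotatedPsiPlus d V) ⬝ᵥ (ρ *ᵥ rotatedPsiPlus d V)).re

lemma fef_eq_iSup_fefAt (ρ : Matrix (Fin d × Fin d) (Fin d × Fin d) ℂ) :
    fef d ρ = ⨆ V, fefAt d ρ V := by
  simp only [fef, fefAt, rotatedPsiPlus, star_mulVec_dotProduct_mulVec]

lemma star_rotatedPsiPlus_dotProduct_self (V : unitaryGroup (Fin d) ℂ) :
    star (rotatedPsiPlus d V) ⬝ᵥ rotatedPsiPlus d V = star (psiPlus d) ⬝ᵥ psiPlus d := by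
  set W := (1 : Matrix (Fin d) (Fin d) ℂ) ⊗ₖ (V : Matrix (Fin d) (Fin d) ℂ)
  have hW : W ∈ unitary _ := kronecker_mem_unitary (one_mem _) V.2
  have h := star_mulVec_dotProduct_mulVec W 1 (psiPlus d)
  rwa [one_mulVec, mul_one, ← star_eq_conjTranspose, Unitary.star_mul_self_of_mem hW,
    one_mulVec] at h

lemma bddAbove_range_fefAt {τ : Matrix (Fin d × Fin d) (Fin d × Fin d) ℂ} (hτ : τ.PosSemidef) :
    BddAbove (Set.range (fefAt d τ)) := by
  refine ⟨(star (psiPlus d) ⬝ᵥ psiPlus d).re * τ.trace.re, ?_⟩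
  rintro _ ⟨V, rfl⟩
  simpa [fefAt, star_rotatedPsiPlus_dotProduct_self] using
    hτ.re_dotProduct_mulVec_le_s3 (rotatedPsiPlus d V)

lemma fefAt_le_fef {τ : Matrix (Fin d × Fin d) (Fin d × Fin d) ℂ} (hτ : τ.PosSemidef)
    (V : unitaryGroup (Fin d) ℂ) : fefAt d τ V ≤ fef d τ :=
  fef_eq_iSup_fefAt τ ▸ le_ciSup (bddAbove_range_fefAt hτ) V

noncomputable def fefWitness (d : ℕ) (U : Matrix (Fin d × Fin d) (Fin d × Fin d) ℂ)
    (V : unitaryGroup (Fin d) ℂ) : Matrix (Fin d × Fin d) (Fin d × Fin d) ℂ :=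
  (d : ℂ)⁻¹ • 1 - proj (Uᴴ *ᵥ rotatedPsiPlus d V)

lemma fefWitness_isHermitian (U : Matrix (Fin d × Fin d) (Fin d × Fin d) ℂ)
    (V : unitaryGroup (Fin d) ℂ) : (fefWitness d U V).IsHermitian :=
  (isHermitian_one.smul (by simp [IsSelfAdjoint] : IsSelfAdjoint (d : ℂ)⁻¹)).sub
    (posSemidef_vecMulVec_self_star _).isHermitian

lemma re_trace_fefWitness_mul (U : Matrix (Fin d × Fin d) (Fin d × Fin d) ℂ)
    (V : unitaryGroup (Fin d) ℂ) {σ : Matrix (Fin d × Fin d) (Fin d × Fin d) ℂ}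
    (hσ : σ.trace = 1) :
    (fefWitness d U V * σ).trace.re = (d : ℝ)⁻¹ - fefAt d (U * σ * Uᴴ) V := by
  rw [fefWitness, trace_smul_one_sub_proj_mul _ _ hσ, star_mulVec_dotProduct_mulVec,
    conjTranspose_conjTranspose, sub_re, fefAt]
  simp

end

theorem exists_witness_of_not_absFEF_general (d : ℕ)
    (ρ : Matrix (Fin d × Fin d) (Fin d × Fin d) ℂ)
    (hρ : IsDensityMatrix ρ) (h : ¬ AbsFEF d ρ) :
    ∃ S : Matrix (Fin d × Fin d) (Fin d × Fin d) ℂ, S.IsHermitian ∧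
      (∀ σ, IsDensityMatrix σ → AbsFEF d σ → 0 ≤ ((S * σ).trace).re) ∧
      ((S * ρ).trace).re < 0 := by
  obtain ⟨U, hU, hlt⟩ :
      ∃ U ∈ unitaryGroup (Fin d × Fin d) ℂ, 1 / (d : ℝ) < fef d (U * ρ * Uᴴ) := by
    simpa [AbsFEF] using h
  rw [fef_eq_iSup_fefAt] at hlt
  obtain ⟨V, hV⟩ := exists_lt_of_lt_ciSup hlt
  refine ⟨fefWitness d U V, fefWitness_isHermitian U V, fun σ hσ hσF => ?_, ?_⟩
  · rw [re_trace_fefWitness_mul U V hσ.2, sub_nonneg, ← one_div]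
    exact (fefAt_le_fef (hσ.1.mul_mul_conjTranspose_same U) V).trans (hσF U hU)
  · rw [re_trace_fefWitness_mul U V hρ.2, sub_neg, ← one_div]
    exact hV

/-- Witness operators: if a density matrix `ρ` is not in `𝔄𝔉_d`, there is a Hermitian
operator `S` with nonnegative expectation on every member of `𝔄𝔉_d` but `Tr(Sρ) < 0`. -/
theorem exists_witness_of_not_absFEF (d : ℕ) (hd : 2 ≤ d)
    (ρ : Matrix (Fin d × Fin d) (Fin d × Fin d) ℂ)
    (hρ : IsDensityMatrix ρ) (h : ¬ AbsFEF d ρ) :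
    ∃ S : Matrix (Fin d × Fin d) (Fin d × Fin d) ℂ, S.IsHermitian ∧
      (∀ σ, IsDensityMatrix σ → AbsFEF d σ → 0 ≤ ((S * σ).trace).re) ∧
      ((S * ρ).trace).re < 0 :=
  exists_witness_of_not_absFEF_general d ρ hρ h
end

section
/- For the two-qubit state X₁ := (2/9)|φ₂⁺⟩⟨φ₂⁺| + (1/9)|01⟩⟨01| + (1/9)|10⟩⟨10| + (5/9)|00⟩⟨00|, the fully entangled fraction satisfies F(X₁) = 1/2; that is, the maximum of ⟨φ₂⁺|(I⊗V)† X₁ (I⊗V)|φ₂⁺⟩ over all 2×2 unitary matrices V equals 1/2. -/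
open Matrix Kronecker Complex
open scoped ComplexOrder

/-- The state `X₁ = (2/9)|φ₂⁺⟩⟨φ₂⁺| + (1/9)|01⟩⟨01| + (1/9)|10⟩⟨10| + (5/9)|00⟩⟨00|`. -/
noncomputable def X₁ : Matrix (Fin 2 × Fin 2) (Fin 2 × Fin 2) ℂ :=
  (2/9 : ℂ) • proj (psiPlus 2) + (1/9 : ℂ) • proj (ket 2 0 1) +
    (1/9 : ℂ) • proj (ket 2 1 0) + (5/9 : ℂ) • proj (ket 2 0 0)

/-! Writing `w = (I ⊗ V)|φ⁺⟩`, whose entries are `w (i, j) = V j i / √2`, the quantity maximised is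
`(|tr V|² + |V₀₁|² + |V₁₀|² + 5|V₀₀|²) / 18`. For unitary `V` the row and column norms force
`|V₁₁| = |V₀₀|` and `|V₀₁|² = |V₁₀|² = 1 - |V₀₀|²`; together with `|tr V|² ≤ 2(|V₀₀|² + |V₁₁|²)`
the numerator is at most `2 + 7|V₀₀|² ≤ 9`, with equality at `V = I`. -/

section UnitaryGroup

variable {n 𝕜 : Type*} [Fintype n] [DecidableEq n] [RCLike 𝕜] {U : Matrix n n 𝕜}

theorem Matrix.sum_norm_sq_row_of_mem_unitaryGroup (hU : U ∈ unitaryGroup n 𝕜) (i : n) :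
    ∑ j, ‖U i j‖ ^ 2 = 1 := by
  have h : (U * star U) i i = 1 := by rw [Unitary.mul_star_self_of_mem hU, one_apply_eq]
  simp only [mul_apply, star_apply, RCLike.star_def, RCLike.mul_conj] at h
  exact_mod_cast h

theorem Matrix.sum_norm_sq_col_of_mem_unitaryGroup (hU : U ∈ unitaryGroup n 𝕜) (j : n) :
    ∑ i, ‖U i j‖ ^ 2 = 1 := by
  have h : (star U * U) j j = 1 := by rw [Unitary.star_mul_self_of_mem hU, one_apply_eq]
  simp only [mul_apply, star_apply, RCLike.star_def, RCLike.conj_mul] at h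
  exact_mod_cast h

end UnitaryGroup

theorem Matrix.star_dotProduct_conjTranspose_mul_mul_mulVec {n m R : Type*} [Fintype n] [Fintype m]
    [CommRing R] [StarRing R] (A : Matrix n m R) (ρ : Matrix n n R) (ψ : m → R) :
    star ψ ⬝ᵥ ((Aᴴ * ρ * A) *ᵥ ψ) = star (A *ᵥ ψ) ⬝ᵥ (ρ *ᵥ (A *ᵥ ψ)) := by
  rw [star_mulVec, ← mulVec_mulVec, ← mulVec_mulVec, dotProduct_mulVec, dotProduct_mulVec,
    dotProduct_mulVec, vecMul_vecMul]

theorem star_dotProduct_proj_mulVec {n : Type*} [Fintype n] (v w : n → ℂ) :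
    star w ⬝ᵥ (proj v *ᵥ w) = (‖star v ⬝ᵥ w‖ ^ 2 : ℝ) := by
  rw [proj, vecMulVec_mulVec, dotProduct_smul, MulOpposite.smul_eq_mul_unop,
    MulOpposite.unop_op, star_dotProduct w v, Complex.star_def, Complex.conj_mul']
  push_cast; ring

theorem kronecker_one_mulVec_psiPlus {d : ℕ} (V : Matrix (Fin d) (Fin d) ℂ) (p : Fin d × Fin d) :
    ((1 ⊗ₖ V) *ᵥ psiPlus d) p = V p.2 p.1 * ((Real.sqrt d)⁻¹ : ℝ) := by
  simp [mulVec, dotProduct, psiPlus, kroneckerMap_apply, one_apply, Fintype.sum_prod_type]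

theorem star_ket_dotProduct {d : ℕ} (i j : Fin d) (w : Fin d × Fin d → ℂ) :
    star (ket d i j) ⬝ᵥ w = w (i, j) := by
  simp [ket, dotProduct, Pi.star_apply, apply_ite]

theorem star_psiPlus_dotProduct_kronecker_one_mulVec {d : ℕ} (V : Matrix (Fin d) (Fin d) ℂ) :
    star (psiPlus d) ⬝ᵥ ((1 ⊗ₖ V) *ᵥ psiPlus d) = V.trace / d := by
  simp only [dotProduct, kronecker_one_mulVec_psiPlus, Fintype.sum_prod_type, Pi.star_apply,
    psiPlus, ofReal_inv, apply_ite, star_inv₀, RCLike.star_def, conj_ofReal, star_zero, ite_mul,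
    zero_mul, Finset.sum_ite_eq, Finset.mem_univ, ↓reduceIte, trace, diag_apply, div_eq_mul_inv]
  have hsqrt : ((√(d : ℝ) : ℂ))⁻¹ * (√(d : ℝ) : ℂ)⁻¹ = (d : ℂ)⁻¹ := by
    rw [← mul_inv, ← Complex.ofReal_mul, Real.mul_self_sqrt d.cast_nonneg, Complex.ofReal_natCast]
  rw [Finset.sum_mul, ← hsqrt]
  exact Finset.sum_congr rfl fun i _ => by ring

theorem fef_integrand_X₁ (V : Matrix (Fin 2) (Fin 2) ℂ) :
    (star (psiPlus 2) ⬝ᵥ (((1 ⊗ₖ V)ᴴ * X₁ * (1 ⊗ₖ V)) *ᵥ psiPlus 2)).re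
      = (‖V 0 0 + V 1 1‖ ^ 2 + ‖V 0 1‖ ^ 2 + ‖V 1 0‖ ^ 2 + 5 * ‖V 0 0‖ ^ 2) / 18 := by
  simp only [star_dotProduct_conjTranspose_mul_mul_mulVec, X₁, add_mulVec, smul_mulVec,
    dotProduct_add, dotProduct_smul, smul_eq_mul, star_dotProduct_proj_mulVec,
    star_psiPlus_dotProduct_kronecker_one_mulVec, star_ket_dotProduct, kronecker_one_mulVec_psiPlus,
    trace_fin_two]
  norm_num [norm_mul, norm_div, mul_pow, div_pow, inv_pow, ← Complex.ofReal_pow]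
  ring

theorem Matrix.norm_sq_trace_add_entries_le_of_mem_unitaryGroup_fin_two
    {U : Matrix (Fin 2) (Fin 2) ℂ} (hU : U ∈ unitaryGroup (Fin 2) ℂ) :
    ‖U 0 0 + U 1 1‖ ^ 2 + ‖U 0 1‖ ^ 2 + ‖U 1 0‖ ^ 2 + 5 * ‖U 0 0‖ ^ 2 ≤ 9 := by
  have row₀ := sum_norm_sq_row_of_mem_unitaryGroup hU 0
  have col₀ := sum_norm_sq_col_of_mem_unitaryGroup hU 0
  have col₁ := sum_norm_sq_col_of_mem_unitaryGroup hU 1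
  simp only [Fin.sum_univ_two] at row₀ col₀ col₁
  have htrace : ‖U 0 0 + U 1 1‖ ^ 2 ≤ 2 * (‖U 0 0‖ ^ 2 + ‖U 1 1‖ ^ 2) :=
    (pow_le_pow_left₀ (norm_nonneg _) (norm_add_le _ _) 2).trans add_sq_le
  linarith [sq_nonneg ‖U 0 1‖]

/-- The fully entangled fraction of `X₁` equals `1/2`. -/
theorem fef_X₁ : fef 2 X₁ = 1/2 := by
  have hle (V : unitaryGroup (Fin 2) ℂ) :
      (star (psiPlus 2) ⬝ᵥ
        (((1 ⊗ₖ (V : Matrix _ _ ℂ))ᴴ * X₁ * (1 ⊗ₖ (V : Matrix _ _ ℂ))) *ᵥ psiPlus 2)).re ≤ 1 / 2 := by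
    rw [fef_integrand_X₁]
    linarith [norm_sq_trace_add_entries_le_of_mem_unitaryGroup_fin_two V.2]
  refine le_antisymm (ciSup_le hle) (le_ciSup_of_le ⟨1 / 2, Set.forall_mem_range.2 hle⟩ 1 ?_)
  rw [fef_integrand_X₁]
  norm_num
end
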